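/- arXiv:1401.4954 — 2 statements merged into one kernel-verified Lean document; each statement's English description precedes it below -/
import Mathlib

section
/- Let k be a field of characteristic 2, G a finite group, and ε₁, ε₂ : G → ℤ/2ℤ essential characters. For a unitary element x = Σ_{g∈G} x_g·g of k[G] and (i, j) ∈ ℤ/2ℤ × ℤ/2ℤ, set S_{ij}(x) = Σ_{g : ε₁(g)=i, ε₂(g)=j} x_g. Then exactly one of the four elements S_{00}(x), S_{10}(x), S_{01}(x), S_{11}(x) equals 1 and the other three equal 0. -/
/-- The canonical involution `x ↦ x*` of the group algebra `k[G]`, determined by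
`g* = g⁻¹` for `g ∈ G`. -/
noncomputable def gStar {k G : Type*} [Semiring k] [Group G] (x : MonoidAlgebra k G) :
    MonoidAlgebra k G := MonoidAlgebra.ofCoeff (Finsupp.equivMapDomain (Equiv.inv G) x.coeff)

/-!
Write `E = (ε₁, ε₂) : G → V = (ℤ/2)²` and `S_v` for the sum of the coefficients of `x` over
`E⁻¹(v)`. Unitarity says `∑_a x_a x_{ha} = δ_{h,1}`. At `h = 1` this is `∑ x_a² = (∑ x_a)²`,
so `∑_v S_v = 1`. For `τ ≠ 0` and a transversal `P` of `{0, τ}` in `V`, the sum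
`∑_{p ∈ P} S_p S_{p+τ}` splits over the `h` with `E h = τ`; the contributions of `h` and `h⁻¹`
add up to `∑_a x_a x_{ha} = 0`, and `h ≠ h⁻¹` because `E` is essential, so the sum vanishes.
These three quadratic relations and `∑_v S_v = 1` force `(S_v)_v` to be a standard basis vector.
-/

open Finset

section GroupAlgebra

variable {k G : Type*} [Semiring k] [Group G]

def IsUnitary (x : MonoidAlgebra k G) : Prop :=
  x * gStar x = 1

@[simp]
theorem coeff_gStar (x : MonoidAlgebra k G) (g : G) : (gStar x).coeff g = x.coeff g⁻¹ := by
  simp [gStar]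

variable [Fintype G]

theorem coeff_mul_gStar_inv (x : MonoidAlgebra k G) (h : G) :
    (x * gStar x).coeff h⁻¹ = ∑ a, x.coeff a * x.coeff (h * a) := by
  rw [MonoidAlgebra.coeff_mul_apply_left, Finsupp.sum_fintype _ _ fun _ => zero_mul _]
  simp

namespace IsUnitary

variable {x : MonoidAlgebra k G}

theorem sum_coeff_mul_coeff_mul_eq_zero (hx : IsUnitary x) {h : G} (hh : h ≠ 1) :
    ∑ a, x.coeff a * x.coeff (h * a) = 0 := by
  rw [← coeff_mul_gStar_inv, hx, MonoidAlgebra.one_def, MonoidAlgebra.coeff_single,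
    Finsupp.single_eq_of_ne (inv_ne_one.mpr hh)]

theorem sum_coeff_sq_eq_one (hx : IsUnitary x) : ∑ a, x.coeff a ^ 2 = 1 := by
  rw [IsUnitary] at hx
  simpa [sq, hx, MonoidAlgebra.one_def] using (coeff_mul_gStar_inv x 1).symm

end IsUnitary

theorem IsUnitary.sum_coeff_eq_one {k : Type*} [CommRing k] [NoZeroDivisors k] [CharP k 2]
    {x : MonoidAlgebra k G} (hx : IsUnitary x) : ∑ g, x.coeff g = 1 :=
  CharTwo.sq_injective <| by simpa [sum_pow_char] using hx.sum_coeff_sq_eq_one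

end GroupAlgebra

theorem map_inv_of_map_mul {G V : Type*} [Group G] [AddCommGroup V] {E : G → V}
    (hE : ∀ a b, E (a * b) = E a + E b) (a : G) : E a⁻¹ = -E a := by
  have hE1 : E 1 = 0 := by simpa using hE 1 1
  exact eq_neg_of_add_eq_zero_left (by rw [← hE, inv_mul_cancel, hE1])

section Characters

variable {k G V : Type*} [Fintype G] [DecidableEq V]

def fiberSum [AddCommMonoid k] (E : G → V) (x : G → k) (v : V) : k :=
  ∑ g with E g = v, x g

theorem sum_fiberSum [AddCommMonoid k] [Fintype V] (E : G → V) (x : G → k) :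
    ∑ v, fiberSum E x v = ∑ g, x g :=
  sum_fiberwise univ E x

variable [Group G] [AddCommGroup V] {E : G → V} [CommSemiring k] (x : G → k)

theorem fiberSum_mul_fiberSum_add (hE : ∀ a b, E (a * b) = E a + E b) (p τ : V) :
    fiberSum E x p * fiberSum E x (p + τ) =
      ∑ h with E h = τ, ∑ a with E a = p, x a * x (h * a) := by
  rw [fiberSum, fiberSum, sum_mul_sum]
  conv_rhs => rw [sum_comm]
  refine sum_congr rfl fun a ha => ?_
  rw [mem_filter] at ha
  refine (sum_equiv (Equiv.mulRight a) (fun h => ?_) fun _ _ => rfl).symm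
  simp [hE, ha.2, add_comm p]

theorem sum_mul_add_sum_mul_inv (hE : ∀ a b, E (a * b) = E a + E b) {τ : V} {P : Finset V}
    (hP : ∀ v, v + τ ∈ P ↔ v ∉ P) {h : G} (hh : E h = τ) :
    ∑ a with E a ∈ P, x a * x (h * a) + ∑ a with E a ∈ P, x a * x (h⁻¹ * a) =
      ∑ a, x a * x (h * a) := by
  rw [← sum_filter_add_sum_filter_not univ (fun a => E a ∈ P)]
  congr 1
  refine (sum_equiv (Equiv.mulLeft h) (fun b => ?_) fun b _ => ?_).symm
  · simp [hE, hh, add_comm τ, hP]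
  · simp [mul_comm (x b)]

theorem sum_fiberSum_mul_fiberSum_add_eq_zero (hE : ∀ a b, E (a * b) = E a + E b)
    (hess : ∀ g : G, g ^ 2 = 1 → E g = 0) (hx : ∀ h : G, h ≠ 1 → ∑ a, x a * x (h * a) = 0)
    {τ : V} (hτ : -τ = τ) {P : Finset V} (hP : ∀ v, v + τ ∈ P ↔ v ∉ P) :
    ∑ p ∈ P, fiberSum E x p * fiberSum E x (p + τ) = 0 := by
  have hτ0 : τ ≠ 0 := by
    rintro rfl
    simpa using hP 0
  have hsq : ∀ h, E h = τ → h ^ 2 ≠ 1 := fun h hh h2 => hτ0 (hh ▸ hess h h2)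
  simp_rw [fiberSum_mul_fiberSum_add x hE]
  rw [sum_comm]
  simp_rw [sum_fiberwise_eq_sum_filter]
  refine sum_involution (fun h _ => h⁻¹) (fun h hh => ?_) (fun h hh _ => ?_) (fun h hh => ?_)
    fun h _ => inv_inv h
  all_goals rw [mem_filter] at hh
  · rw [sum_mul_add_sum_mul_inv x hE hP hh.2]
    exact hx h fun h1 => hsq h hh.2 (by simp [h1])
  · exact fun hinv => hsq h hh.2 (sq h ▸ inv_eq_iff_mul_eq_one.mp hinv)
  · simp [map_inv_of_map_mul hE, hh.2, hτ]

end Characters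

-- `S (0,0) + S (1,0)` and `S (0,0) + S (0,1)` are idempotent, and `S (0,0)` is their product.
theorem exists_eq_one_of_cross_relations {k : Type*} [CommRing k] [NoZeroDivisors k]
    [CharP k 2] (S : ZMod 2 × ZMod 2 → k) (hsum : ∑ v, S v = 1)
    (hcross : ∀ (τ : ZMod 2 × ZMod 2) (P : Finset (ZMod 2 × ZMod 2)),
      (∀ v, v + τ ∈ P ↔ v ∉ P) → ∑ p ∈ P, S p * S (p + τ) = 0) :
    ∃ p, S p = 1 ∧ ∀ q ≠ p, S q = 0 := by
  suffices ∃ p, ∀ q, S q = if q = p then 1 else 0 by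
    obtain ⟨p, hp⟩ := this
    exact ⟨p, by simp [hp], fun q hq => by simp [hp, hq]⟩
  have h₁ : S (0, 0) * S (1, 1) + S (1, 0) * S (0, 1) = 0 := by
    simpa [sum_pair, CharTwo.add_self_eq_zero] using hcross (1, 1) {(0, 0), (1, 0)} (by decide)
  have h₂ : S (0, 0) * S (1, 0) + S (0, 1) * S (1, 1) = 0 := by
    simpa [sum_pair, CharTwo.add_self_eq_zero] using hcross (1, 0) {(0, 0), (0, 1)} (by decide)
  have h₃ : S (0, 0) * S (0, 1) + S (1, 0) * S (1, 1) = 0 := by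
    simpa [sum_pair, CharTwo.add_self_eq_zero] using hcross (0, 1) {(0, 0), (1, 0)} (by decide)
  have h₄ : S (0, 0) + S (1, 0) + S (0, 1) + S (1, 1) = 1 := by
    rw [← hsum, show (univ : Finset (ZMod 2 × ZMod 2)) = {(0, 0), (1, 0), (0, 1), (1, 1)} by
      decide]
    simp [sum_insert, add_assoc]
  have hu : S (0, 0) + S (1, 0) = 0 ∨ S (0, 0) + S (1, 0) = 1 :=
    IsIdempotentElem.iff_eq_zero_or_one.mp <| by
      unfold IsIdempotentElem
      linear_combination (S (0, 0) + S (1, 0)) * h₄ - h₁ - h₃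
  have hw : S (0, 0) + S (0, 1) = 0 ∨ S (0, 0) + S (0, 1) = 1 :=
    IsIdempotentElem.iff_eq_zero_or_one.mp <| by
      unfold IsIdempotentElem
      linear_combination (S (0, 0) + S (0, 1)) * h₄ - h₁ - h₂
  have ha : S (0, 0) = (S (0, 0) + S (1, 0)) * (S (0, 0) + S (0, 1)) := by
    linear_combination -h₁ - S (0, 0) * h₄ + S (0, 0) * S (1, 1) * CharTwo.two_eq_zero (R := k)
  have hcover : ∀ q : ZMod 2 × ZMod 2, q = (0, 0) ∨ q = (1, 0) ∨ q = (0, 1) ∨ q = (1, 1) := by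
    decide
  rcases hu with hu | hu <;> rcases hw with hw | hw <;> simp only [hu, hw, mul_zero, mul_one] at ha
  · refine ⟨(1, 1), fun q => ?_⟩
    rcases hcover q with rfl | rfl | rfl | rfl <;> simp <;> grind
  · refine ⟨(0, 1), fun q => ?_⟩
    rcases hcover q with rfl | rfl | rfl | rfl <;> simp <;> grind
  · refine ⟨(1, 0), fun q => ?_⟩
    rcases hcover q with rfl | rfl | rfl | rfl <;> simp <;> grind
  · refine ⟨(0, 0), fun q => ?_⟩
    rcases hcover q with rfl | rfl | rfl | rfl <;> simp <;> grind

/-- Let `k` be a field of characteristic 2, `G` a finite group, and `ε₁, ε₂ : G → ℤ/2ℤ`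
essential characters. For a unitary `x ∈ k[G]` set
`S_{ij}(x) = Σ_{ε₁(g)=i, ε₂(g)=j} x_g`. Then exactly one of the four elements
`S_{00}(x), S_{10}(x), S_{01}(x), S_{11}(x)` equals `1` and the other three equal `0`. -/
theorem stmt_5 (k G : Type*) [Field k] [CharP k 2] [Group G] [Fintype G]
    (ε₁ ε₂ : G → ZMod 2)
    (hhom₁ : ∀ a b : G, ε₁ (a * b) = ε₁ a + ε₁ b)
    (hhom₂ : ∀ a b : G, ε₂ (a * b) = ε₂ a + ε₂ b)
    (hess₁ : ∀ g : G, g ^ 2 = 1 → ε₁ g = 0)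
    (hess₂ : ∀ g : G, g ^ 2 = 1 → ε₂ g = 0)
    (x : MonoidAlgebra k G) (hx : x * gStar x = 1) :
    ∃ p : ZMod 2 × ZMod 2,
      (∑ g ∈ Finset.univ.filter fun g => (ε₁ g, ε₂ g) = p, x.coeff g) = 1 ∧
        ∀ q : ZMod 2 × ZMod 2, q ≠ p →
          (∑ g ∈ Finset.univ.filter fun g => (ε₁ g, ε₂ g) = q, x.coeff g) = 0 := by
  let E : G → ZMod 2 × ZMod 2 := fun g => (ε₁ g, ε₂ g)
  have hE : ∀ a b, E (a * b) = E a + E b := fun a b => Prod.ext (hhom₁ a b) (hhom₂ a b)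
  have hEss : ∀ g : G, g ^ 2 = 1 → E g = 0 := fun g hg => Prod.ext (hess₁ g hg) (hess₂ g hg)
  have hunitary : IsUnitary x := hx
  refine exists_eq_one_of_cross_relations (fiberSum E x.coeff)
    (by rw [sum_fiberSum, hunitary.sum_coeff_eq_one]) fun τ P hP => ?_
  exact sum_fiberSum_mul_fiberSum_add_eq_zero x.coeff hE hEss
    (fun _ => hunitary.sum_coeff_mul_coeff_mul_eq_zero) (CharTwo.neg_eq τ) hP
end

section
/- Let k be a field of characteristic 2, G a finite group, and h a hermitian element of k[G] with δ_s(h) = 0 for every s ∈ G of order 2; let q_h(a, b) = δ(a·h·b*). Then q_h(x, x) = t(h)·t(x)² for every x ∈ k[G]. If moreover h is invertible, then there exists e ∈ k[G] with σ_G·x = q_h(x, e)·e for all x ∈ k[G] (where σ_G = Σ_{g∈G} g) if and only if t(h) is a square in k; in that case, if t(h) = μ² with μ ∈ k, then e = μ⁻¹·σ_G has this property. -/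
/-- The form `q_h(a,b) = δ(a·h·b*)` associated to an element `h` of `k[G]`,
where `δ` is the coefficient of the identity. -/
noncomputable def qForm {k G : Type*} [Field k] [Group G] (h a b : MonoidAlgebra k G) :
    k := (a * h * gStar b).coeff 1

/-- The augmentation `t(x) = Σ_g x_g` of `k[G]`. -/
noncomputable def aug {k G : Type*} [Field k] [Group G] [Fintype G]
    (x : MonoidAlgebra k G) : k := ∑ g : G, x.coeff g

/-- The element `σ_G = Σ_{g ∈ G} g` of `k[G]`. -/
noncomputable def sigmaG (k G : Type*) [Field k] [Group G] [Fintype G] :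
    MonoidAlgebra k G := ∑ g : G, MonoidAlgebra.of k G g

open Finset MonoidAlgebra

theorem CharTwo.sum_eq_sum_filter_fixed {ι R : Type*} [DecidableEq ι] [CommRing R]
    [CharP R 2] (s : Finset ι) (σ : ι → ι) (hσ : ∀ i ∈ s, σ i ∈ s)
    (hσσ : ∀ i ∈ s, σ (σ i) = i) (f : ι → R) (hf : ∀ i ∈ s, f (σ i) = f i) :
    ∑ i ∈ s, f i = ∑ i ∈ s with σ i = i, f i := by
  rw [← sum_filter_add_sum_filter_not s (fun i => σ i = i), add_eq_left]
  refine sum_involution (fun i _ => σ i) (fun i hi => ?_) (fun i hi _ => (mem_filter.1 hi).2)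
    (fun i hi => ?_) (fun i hi => hσσ i (mem_filter.1 hi).1)
  · rw [hf i (mem_filter.1 hi).1, CharTwo.add_self_eq_zero]
  · obtain ⟨his, hne⟩ := mem_filter.1 hi
    exact mem_filter.2 ⟨hσ i his, fun h => hne (h.symm.trans (hσσ i his))⟩

theorem CharTwo.sum_sum_eq_sum_diag {ι R : Type*} [Fintype ι] [CommRing R] [CharP R 2]
    (F : ι → ι → R) (hF : ∀ i j, F i j = F j i) : ∑ i, ∑ j, F i j = ∑ i, F i i := by
  classical
  rw [← Fintype.sum_prod_type',
    CharTwo.sum_eq_sum_filter_fixed univ Prod.swap (fun _ _ => mem_univ _)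
      (fun p _ => p.swap_swap) _ (fun p _ => hF _ _),
    sum_filter, Fintype.sum_prod_type]
  simp [eq_comm]

section GroupAlgebra

variable {k G : Type*}

theorem gStar_coeff [Semiring k] [Group G] (x : MonoidAlgebra k G) (g : G) :
    (gStar x).coeff g = x.coeff g⁻¹ := rfl

theorem gStar_smul [Semiring k] [Group G] (c : k) (x : MonoidAlgebra k G) :
    gStar (c • x) = c • gStar x := by
  ext g; simp only [gStar_coeff, coeff_smul_apply]

theorem coeff_inv_of_gStar_eq [Semiring k] [Group G] {h : MonoidAlgebra k G}
    (hherm : gStar h = h) (g : G) : h.coeff g⁻¹ = h.coeff g := by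
  rw [← gStar_coeff, hherm]

theorem coeff_mul_eq_sum [Semiring k] [Group G] [Fintype G] (x y : MonoidAlgebra k G) (g : G) :
    (x * y).coeff g = ∑ a : G, x.coeff a * y.coeff (a⁻¹ * g) := by
  rw [coeff_mul_apply_left, Finsupp.sum_fintype _ _ (fun _ => zero_mul _)]

theorem qForm_smul_right [Field k] [Group G] (h x e : MonoidAlgebra k G) (c : k) :
    qForm h x (c • e) = c * qForm h x e := by
  rw [qForm, qForm, gStar_smul, mul_smul_comm, coeff_smul_apply, smul_eq_mul]

variable [Field k] [Group G] [Fintype G]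

theorem aug_eq_lift (x : MonoidAlgebra k G) : aug x = lift k k G 1 x := by
  simp [aug, lift_apply, Finsupp.sum_fintype]

theorem aug_mul (x y : MonoidAlgebra k G) : aug (x * y) = aug x * aug y := by
  simp only [aug_eq_lift, map_mul]

theorem aug_one : aug (1 : MonoidAlgebra k G) = 1 := by
  rw [aug_eq_lift, map_one]

theorem aug_ne_zero_of_isUnit {h : MonoidAlgebra k G} (hu : IsUnit h) : aug h ≠ 0 := by
  rw [aug_eq_lift]
  exact (hu.map _).ne_zero

theorem sigmaG_coeff (g : G) : (sigmaG k G).coeff g = 1 := by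
  classical
  simp [sigmaG, coeff_sum, coeff_single, Finsupp.single_apply]

theorem gStar_sigmaG : gStar (sigmaG k G) = sigmaG k G := by
  ext g; rw [gStar_coeff, sigmaG_coeff, sigmaG_coeff]

theorem sigmaG_mul (x : MonoidAlgebra k G) : sigmaG k G * x = aug x • sigmaG k G := by
  ext g
  rw [coeff_mul_eq_sum, coeff_smul_apply, sigmaG_coeff, smul_eq_mul, mul_one, aug]
  simp only [sigmaG_coeff, one_mul]
  exact Fintype.sum_equiv ((Equiv.inv G).trans (Equiv.mulRight g)) _ _ (fun _ => rfl)

theorem smul_sigmaG_injective : Function.Injective fun c : k => c • sigmaG k G :=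
  fun a b hab => by simpa [sigmaG_coeff] using congrArg (coeff · 1) hab

theorem qForm_sigmaG (h x : MonoidAlgebra k G) : qForm h x (sigmaG k G) = aug x * aug h := by
  rw [qForm, gStar_sigmaG, coeff_mul_eq_sum, ← aug_mul]
  simp [sigmaG_coeff, aug]

theorem qForm_eq_sum (h x y : MonoidAlgebra k G) :
    qForm h x y = ∑ a : G, ∑ b : G, x.coeff b * h.coeff (b⁻¹ * a) * y.coeff a := by
  simp only [qForm, coeff_mul_eq_sum, gStar_coeff, mul_one, inv_inv, sum_mul]

theorem sigmaG_mul_eq_qForm_smul {h : MonoidAlgebra k G} (hu : IsUnit h) {μ : k}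
    (hμ : aug h = μ ^ 2) (x : MonoidAlgebra k G) :
    sigmaG k G * x = qForm h x (μ⁻¹ • sigmaG k G) • (μ⁻¹ • sigmaG k G) := by
  have hμ0 : μ ≠ 0 := by
    rintro rfl
    exact aug_ne_zero_of_isUnit hu (by rw [hμ, zero_pow two_ne_zero])
  rw [sigmaG_mul, qForm_smul_right, qForm_sigmaG, hμ, smul_smul]
  congr 1
  field_simp

theorem isSquare_aug_of_sigmaG_mul_eq {h e : MonoidAlgebra k G}
    (he : ∀ x, sigmaG k G * x = qForm h x e • e) : IsSquare (aug h) := by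
  set c := qForm h 1 e
  have hσ : sigmaG k G = c • e := by simpa using he 1
  have hc : c ≠ 0 := by
    rintro hc
    simpa [hc, sigmaG_coeff] using congrArg (coeff · 1) hσ
  have he' : e = c⁻¹ • sigmaG k G := by rw [hσ, smul_smul, inv_mul_cancel₀ hc, one_smul]
  have key : (1 : k) • sigmaG k G = (c⁻¹ * aug h * c⁻¹) • sigmaG k G := by
    simpa [he', qForm_smul_right, qForm_sigmaG, aug_one, smul_smul] using he 1
  refine ⟨c, ?_⟩
  have := smul_sigmaG_injective key
  field_simp at this
  rw [← this, sq]

variable [CharP k 2]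

theorem aug_eq_coeff_one {h : MonoidAlgebra k G} (hherm : gStar h = h)
    (hspec : ∀ s : G, orderOf s = 2 → h.coeff s = 0) : aug h = h.coeff 1 := by
  classical
  rw [aug, CharTwo.sum_eq_sum_filter_fixed univ (·⁻¹) (fun _ _ => mem_univ _)
    (fun g _ => inv_inv g) _ (fun g _ => coeff_inv_of_gStar_eq hherm g)]
  refine sum_eq_single_of_mem 1 (by simp) fun g hg hg1 => hspec g ?_
  exact orderOf_eq_prime (by rw [sq, mul_eq_one_iff_eq_inv, (mem_filter.1 hg).2]) hg1

theorem qForm_self_of_gStar_eq {h : MonoidAlgebra k G} (hherm : gStar h = h)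
    (x : MonoidAlgebra k G) : qForm h x x = h.coeff 1 * aug x ^ 2 := by
  rw [qForm_eq_sum, CharTwo.sum_sum_eq_sum_diag, aug, CharTwo.sum_sq, mul_sum]
  · simp only [inv_mul_cancel]
    exact sum_congr rfl fun a _ => by ring
  · intro a b
    rw [← coeff_inv_of_gStar_eq hherm (a⁻¹ * b), mul_inv_rev, inv_inv]
    ring

end GroupAlgebra

/-- Serre's proposition 7.6.12: let `k` be a field of characteristic 2, `G` a finite
group, `h` a hermitian element of `k[G]` with `δ_s(h) = 0` for all `s` of order 2, and
`q_h(a,b) = δ(a·h·b*)`. Then `q_h(x,x) = t(h)·t(x)²` for all `x`. If moreover `h` is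
invertible, then there exists `e` with `σ_G·x = q_h(x,e)·e` for all `x` iff `t(h)` is a
square in `k`; and if `t(h) = μ²`, then `e = μ⁻¹·σ_G` works. -/
theorem stmt_16 (k G : Type*) [Field k] [CharP k 2] [Group G] [Fintype G]
    (h : MonoidAlgebra k G) (hherm : gStar h = h)
    (hspec : ∀ s : G, orderOf s = 2 → h.coeff s = 0) :
    (∀ x : MonoidAlgebra k G, qForm h x x = aug h * aug x ^ 2) ∧
    (IsUnit h →
      ((∃ e : MonoidAlgebra k G, ∀ x : MonoidAlgebra k G,
            sigmaG k G * x = qForm h x e • e) ↔ IsSquare (aug h)) ∧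
      ∀ μ : k, aug h = μ ^ 2 → ∀ x : MonoidAlgebra k G,
        sigmaG k G * x = qForm h x (μ⁻¹ • sigmaG k G) • (μ⁻¹ • sigmaG k G)) := by
  refine ⟨fun x => by rw [qForm_self_of_gStar_eq hherm, aug_eq_coeff_one hherm hspec],
    fun hu => ⟨⟨fun ⟨_, he⟩ => isSquare_aug_of_sigmaG_mul_eq he, fun ⟨μ, hμ⟩ => ?_⟩,
      fun μ hμ => sigmaG_mul_eq_qForm_smul hu hμ⟩⟩
  exact ⟨_, sigmaG_mul_eq_qForm_smul hu (by rw [hμ, sq])⟩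
end
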